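/- Let (F, U) be a matched pair of Hopf algebras and M a vector space equipped with a left F-comodule structure m ↦ m⟪−1⟫ ⊗ m⟪0⟫ and a left U-comodule structure m ↦ m⟦−1⟧ ⊗ m⟦0⟧. Then the map m ↦ m⟪−1⟫ ⋈ m⟪0⟫⟦−1⟧ ⊗ m⟪0⟫⟦0⟧ defines a left comodule structure over the bicrossed product coalgebra F ⋈ U if and only if (m⟪0⟫⟦−1⟧)⟨0⟩ ⊗ m⟪−1⟫·(m⟪0⟫⟦−1⟧)⟨1⟩ ⊗ m⟪0⟫⟦0⟧ = m⟦−1⟧ ⊗ (m⟦0⟧)⟪−1⟫ ⊗ (m⟦0⟧)⟪0⟫, where u ↦ u⟨0⟩ ⊗ u⟨1⟩ ∈ U ⊗ F is the right F-coaction on U. -/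

import Mathlib

/-!
STATEMENT 11: Let `(F, U)` be a matched pair of Hopf algebras and `M` a vector space
with a left `F`-comodule structure `∇_F` and a left `U`-comodule structure `∇_U`.
Then `m ↦ m⟪₋₁⟫ ⋈ m⟪₀⟫⟦₋₁⟧ ⊗ m⟪₀⟫⟦₀⟧` is a left comodule structure over the
bicrossed product coalgebra `F ⋈ U` (with `Δ(f ⋈ u) = f₍₁₎ ⋈ u₍₁₎⁽⁰⁾ ⊗ f₍₂₎·u₍₁₎⁽¹⁾ ⋈ u₍₂₎`)
if and only if
`(m⟪₀⟫⟦₋₁⟧)⁽⁰⁾ ⊗ m⟪₋₁⟫·(m⟪₀⟫⟦₋₁⟧)⁽¹⁾ ⊗ m⟪₀⟫⟦₀⟧ = m⟦₋₁⟧ ⊗ (m⟦₀⟧)⟪₋₁⟫ ⊗ (m⟦₀⟧)⟪₀⟫`,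
where `u ↦ u⁽⁰⁾ ⊗ u⁽¹⁾` is the right `F`-coaction on `U`.
-/

attribute [-instance] LieAlgebra.ofAssociativeAlgebra
open TensorProduct LinearMap Coalgebra
noncomputable section

variable {k : Type} [Field k]
variable {M : Type} [AddCommGroup M] [Module k M]

section Generic
variable {H : Type} [AddCommGroup H] [Module k H]

/-- Generic left comodule structure over a "coalgebra" given by comultiplication/counit maps. -/
def IsComodG (Δ : H →ₗ[k] H ⊗[k] H) (ε : H →ₗ[k] k) (cm : M →ₗ[k] H ⊗[k] M) : Prop :=
  ((TensorProduct.assoc k H H M).toLinearMap ∘ₗ (LinearMap.rTensor M Δ) ∘ₗ cm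
      = (LinearMap.lTensor H cm) ∘ₗ cm) ∧
    ((TensorProduct.lid k M).toLinearMap ∘ₗ (LinearMap.rTensor M ε) ∘ₗ cm = LinearMap.id)

end Generic

variable {F U : Type} [CommRing F] [HopfAlgebra k F] [Ring U] [HopfAlgebra k U]

variable (k) in
/-- Swap the first two legs of `A ⊗ (B ⊗ C)`. -/
def swapHead (A B C : Type) [AddCommGroup A] [Module k A]
    [AddCommGroup B] [Module k B] [AddCommGroup C] [Module k C] :
    A ⊗[k] (B ⊗[k] C) →ₗ[k] B ⊗[k] (A ⊗[k] C) :=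
  (TensorProduct.assoc k B A C).toLinearMap ∘ₗ
    (LinearMap.rTensor C (TensorProduct.comm k A B).toLinearMap) ∘ₗ
      (TensorProduct.assoc k A B C).symm.toLinearMap

variable (k F U) in
/-- The comultiplication of the bicrossed product coalgebra `F ⋈ U`:
`Δ(f ⊗ u) = (f₍₁₎ ⊗ u₍₁₎⁽⁰⁾) ⊗ ((f₍₂₎ · u₍₁₎⁽¹⁾) ⊗ u₍₂₎)`. -/
def bprodComul (cU : U →ₗ[k] U ⊗[k] F) :
    F ⊗[k] U →ₗ[k] (F ⊗[k] U) ⊗[k] (F ⊗[k] U) :=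
  (LinearMap.lTensor (F ⊗[k] U)
      ((LinearMap.rTensor U (LinearMap.mul' k F)) ∘ₗ
        (TensorProduct.assoc k F F U).symm.toLinearMap)) ∘ₗ
    (TensorProduct.tensorTensorTensorComm k F F U (F ⊗[k] U)).toLinearMap ∘ₗ
      (LinearMap.lTensor (F ⊗[k] F)
        ((TensorProduct.assoc k U F U).toLinearMap ∘ₗ (LinearMap.rTensor U cU))) ∘ₗ
        (TensorProduct.map (Coalgebra.comul (R := k) (A := F))
          (Coalgebra.comul (R := k) (A := U)))

variable (k F U) in
/-- The counit of the bicrossed product coalgebra `F ⋈ U`. -/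
def bprodCounit : F ⊗[k] U →ₗ[k] k :=
  (TensorProduct.lid k k).toLinearMap ∘ₗ
    (TensorProduct.map (Coalgebra.counit (R := k) (A := F))
      (Coalgebra.counit (R := k) (A := U)))

/-!
Write `γ = assoc⁻¹ ∘ (F ⊗ ∇_U) ∘ ∇_F` for the combined map. Its counit law follows from those of
`∇_F` and `∇_U`. Using the coassociativity of `∇_F` and `∇_U`, both sides of the coassociativity
law of `γ` become, after regrouping the tensor legs, `m ↦ m⟪₋₁⟫ ⊗ Φ(m⟪₀⟫)`, with
`Φ = (U ⊗ F ⊗ ∇_U) ∘ τ ∘ (F ⊗ ∇_U) ∘ ∇_F` on the left and `Φ = (U ⊗ F ⊗ ∇_U) ∘ (U ⊗ ∇_F) ∘ ∇_U`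
on the right, where `τ (f ⊗ u ⊗ x) = u⁽⁰⁾ ⊗ f·u⁽¹⁾ ⊗ x`. Applying `ε_F` to the first leg recovers
`Φ`, and `U ⊗ F ⊗ ∇_U` is split injective thanks to the counit law of `∇_U`, so coassociativity of
`γ` is equivalent to `τ ∘ (F ⊗ ∇_U) ∘ ∇_F = (U ⊗ ∇_F) ∘ ∇_U`.
-/

section Coaction

variable {R C N X : Type*} [CommSemiring R] [AddCommMonoid C] [Module R C]
  [AddCommMonoid N] [Module R N] [AddCommMonoid X] [Module R X]

theorem lTensor_comp_eq_lTensor_comp_iff_of_counit {ε : C →ₗ[R] R} {ρ : N →ₗ[R] C ⊗[R] N}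
    (hρ : (TensorProduct.lid R N).toLinearMap ∘ₗ rTensor N ε ∘ₗ ρ = LinearMap.id)
    {f g : N →ₗ[R] X} :
    lTensor C f ∘ₗ ρ = lTensor C g ∘ₗ ρ ↔ f = g := by
  have counit_comp : ∀ h : N →ₗ[R] X,
      (TensorProduct.lid R X).toLinearMap ∘ₗ rTensor X ε ∘ₗ lTensor C h
        = h ∘ₗ (TensorProduct.lid R N).toLinearMap ∘ₗ rTensor N ε := fun h => by
    ext c n
    simp
  have recover : ∀ h : N →ₗ[R] X,
      (TensorProduct.lid R X).toLinearMap ∘ₗ rTensor X ε ∘ₗ lTensor C h ∘ₗ ρ = h := fun h => by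
    simp only [← comp_assoc] at counit_comp ⊢
    rw [counit_comp]
    simp only [comp_assoc, hρ, comp_id]
  exact ⟨fun hfg => by rw [← recover f, hfg, recover g], fun hfg => hfg ▸ rfl⟩

theorem lTensor_comp_cancel_left {Y Z : Type*} [AddCommMonoid Y] [Module R Y]
    [AddCommMonoid Z] [Module R Z] {s : X →ₗ[R] Y} {r : Y →ₗ[R] X}
    (hrs : r ∘ₗ s = LinearMap.id) {f g : Z →ₗ[R] C ⊗[R] X} :
    lTensor C s ∘ₗ f = lTensor C s ∘ₗ g ↔ f = g := by
  refine cancel_left fun x y hxy => ?_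
  simpa [← comp_apply (lTensor C r), ← lTensor_comp, hrs] using congrArg (lTensor C r) hxy

theorem assoc_comp_rTensor_comul_comp_lTensor {Δ : C →ₗ[R] C ⊗[R] C} {ρ : N →ₗ[R] C ⊗[R] N}
    (hρ : (TensorProduct.assoc R C C N).toLinearMap ∘ₗ rTensor N Δ ∘ₗ ρ = lTensor C ρ ∘ₗ ρ)
    (f : N →ₗ[R] X) :
    (TensorProduct.assoc R C C X).toLinearMap ∘ₗ rTensor X Δ ∘ₗ lTensor C f ∘ₗ ρ
      = lTensor C (lTensor C f ∘ₗ ρ) ∘ₗ ρ := by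
  have comul_comp : (TensorProduct.assoc R C C X).toLinearMap ∘ₗ rTensor X Δ ∘ₗ lTensor C f
      = lTensor C (lTensor C f) ∘ₗ (TensorProduct.assoc R C C N).toLinearMap ∘ₗ rTensor N Δ := by
    rw [rTensor_comp_lTensor, ← lTensor_comp_rTensor, lTensor_tensor]
    ext c n
    simp
  simp only [← comp_assoc] at comul_comp hρ ⊢
  rw [comul_comp]
  simp only [comp_assoc] at hρ ⊢
  rw [hρ, lTensor_comp, comp_assoc]

end Coaction

section Twist

variable {A V X Y : Type} [Ring A] [Algebra k A] [AddCommGroup V] [Module k V]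
  [AddCommGroup X] [Module k X] [AddCommGroup Y] [Module k Y]

variable (k) in
/-- `f ⊗ (v ⊗ x) ↦ v⁽⁰⁾ ⊗ (f · v⁽¹⁾ ⊗ x)` for a right `A`-coaction `v ↦ v⁽⁰⁾ ⊗ v⁽¹⁾`. -/
def coactionTwist (c : V →ₗ[k] V ⊗[k] A) (X : Type) [AddCommGroup X] [Module k X] :
    A ⊗[k] (V ⊗[k] X) →ₗ[k] V ⊗[k] (A ⊗[k] X) :=
  lTensor V (rTensor X (mul' k A) ∘ₗ (TensorProduct.assoc k A A X).symm.toLinearMap) ∘ₗ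
    swapHead k A V (A ⊗[k] X) ∘ₗ
      lTensor A ((TensorProduct.assoc k V A X).toLinearMap ∘ₗ rTensor X c)

theorem lTensor_lTensor_comp_coactionTwist (c : V →ₗ[k] V ⊗[k] A) (g : X →ₗ[k] Y) :
    lTensor V (lTensor A g) ∘ₗ coactionTwist k c X
      = coactionTwist k c Y ∘ₗ lTensor A (lTensor V g) := by
  ext a v x
  simp only [coactionTwist, swapHead, coe_comp, Function.comp_apply, lTensor_tmul,
    rTensor_tmul, LinearEquiv.coe_coe, AlgebraTensorModule.curry_apply, curry_apply,
    LinearMap.coe_restrictScalars]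
  induction c v using TensorProduct.induction_on with
  | zero => simp
  | add p q hp hq => simp only [add_tmul, tmul_add, map_add, hp, hq]
  | tmul w b => simp

end Twist

section Regroup

variable {A B C D X Y : Type} [AddCommGroup A] [Module k A] [AddCommGroup B] [Module k B]
  [AddCommGroup C] [Module k C] [AddCommGroup D] [Module k D] [AddCommGroup X] [Module k X]
  [AddCommGroup Y] [Module k Y]

variable (k A B C D X) in
def assocPairs :
    A ⊗[k] (B ⊗[k] (C ⊗[k] (D ⊗[k] X))) ≃ₗ[k] (A ⊗[k] B) ⊗[k] ((C ⊗[k] D) ⊗[k] X) :=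
  (TensorProduct.assoc k A B _).symm ≪≫ₗ
    LinearEquiv.lTensor (A ⊗[k] B) (TensorProduct.assoc k C D X).symm

theorem lTensor_assoc_symm_comp_assoc_symm (φ : Y →ₗ[k] C ⊗[k] (D ⊗[k] X)) :
    lTensor (A ⊗[k] B) ((TensorProduct.assoc k C D X).symm.toLinearMap ∘ₗ φ) ∘ₗ
        (TensorProduct.assoc k A B Y).symm.toLinearMap
      = (assocPairs k A B C D X).toLinearMap ∘ₗ lTensor A (lTensor B φ) := by
  ext a b y
  simp [assocPairs]

variable (k) in
def combinedCoaction (ρA : M →ₗ[k] A ⊗[k] M) (ρB : M →ₗ[k] B ⊗[k] M) :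
    M →ₗ[k] (A ⊗[k] B) ⊗[k] M :=
  (TensorProduct.assoc k A B M).symm.toLinearMap ∘ₗ lTensor A ρB ∘ₗ ρA

theorem lTensor_combinedCoaction_comp_combinedCoaction (ρA : M →ₗ[k] A ⊗[k] M)
    (ρB : M →ₗ[k] B ⊗[k] M) :
    lTensor (A ⊗[k] B) (combinedCoaction k ρA ρB) ∘ₗ combinedCoaction k ρA ρB
      = (assocPairs k A B A B M).toLinearMap ∘ₗ
          lTensor A (lTensor B (lTensor A ρB) ∘ₗ lTensor B ρA ∘ₗ ρB) ∘ₗ ρA := by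
  rw [combinedCoaction, ← comp_assoc _ _ (lTensor (A ⊗[k] B) _),
    lTensor_assoc_symm_comp_assoc_symm]
  simp only [lTensor_comp, comp_assoc]

end Regroup

section BicrossedProduct

theorem lid_comp_rTensor_bprodCounit_comp_assoc_symm :
    (TensorProduct.lid k M).toLinearMap ∘ₗ rTensor M (bprodCounit k F U) ∘ₗ
        (TensorProduct.assoc k F U M).symm.toLinearMap
      = ((TensorProduct.lid k M).toLinearMap ∘ₗ rTensor M (counit (R := k) (A := F))) ∘ₗ
          lTensor F ((TensorProduct.lid k M).toLinearMap ∘ₗ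
            rTensor M (counit (R := k) (A := U))) := by
  ext f u m
  simp [bprodCounit, mul_smul, smul_comm (counit f)]

theorem assoc_comp_rTensor_bprodComul_comp_assoc_symm (cU : U →ₗ[k] U ⊗[k] F) (X : Type)
    [AddCommGroup X] [Module k X] :
    (TensorProduct.assoc k (F ⊗[k] U) (F ⊗[k] U) X).toLinearMap ∘ₗ
        rTensor X (bprodComul k F U cU) ∘ₗ (TensorProduct.assoc k F U X).symm.toLinearMap
      = (assocPairs k F U F U X).toLinearMap ∘ₗ lTensor F (coactionTwist k cU (U ⊗[k] X)) ∘ₗ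
          (TensorProduct.assoc k F F _).toLinearMap ∘ₗ rTensor _ (comul (R := k) (A := F)) ∘ₗ
            lTensor F ((TensorProduct.assoc k U U X).toLinearMap ∘ₗ
              rTensor X (comul (R := k) (A := U))) := by
  ext f u x
  simp only [bprodComul, coactionTwist, swapHead, assocPairs, coe_comp, Function.comp_apply,
    lTensor_tmul, rTensor_tmul, LinearEquiv.coe_coe, AlgebraTensorModule.curry_apply, curry_apply,
    LinearMap.coe_restrictScalars, TensorProduct.assoc_symm_tmul, TensorProduct.map_tmul]
  induction comul (R := k) f using TensorProduct.induction_on with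
  | zero => simp
  | add p q hp hq => simp only [add_tmul, map_add, hp, hq]
  | tmul a b =>
    induction comul (R := k) u using TensorProduct.induction_on with
    | zero => simp
    | add p q hp hq => simp only [add_tmul, tmul_add, map_add, hp, hq]
    | tmul v w =>
      simp only [coe_comp, Function.comp_apply, rTensor_tmul, lTensor_tmul, LinearEquiv.coe_coe,
        TensorProduct.assoc_tmul]
      induction cU v using TensorProduct.induction_on with
      | zero => simp
      | add p q hp hq => simp only [add_tmul, tmul_add, map_add, hp, hq]
      | tmul v' b' => simp

variable {cmF : M →ₗ[k] F ⊗[k] M} {cmU : M →ₗ[k] U ⊗[k] M}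

theorem lid_comp_rTensor_bprodCounit_comp_combinedCoaction
    (hF : (TensorProduct.lid k M).toLinearMap ∘ₗ rTensor M (counit (R := k) (A := F)) ∘ₗ cmF
      = LinearMap.id)
    (hU : (TensorProduct.lid k M).toLinearMap ∘ₗ rTensor M (counit (R := k) (A := U)) ∘ₗ cmU
      = LinearMap.id) :
    (TensorProduct.lid k M).toLinearMap ∘ₗ rTensor M (bprodCounit k F U) ∘ₗ
        combinedCoaction k cmF cmU = LinearMap.id := by
  have hU' : ((TensorProduct.lid k M).toLinearMap ∘ₗ rTensor M (counit (R := k) (A := U))) ∘ₗ cmU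
      = LinearMap.id := hU
  calc _ = ((TensorProduct.lid k M).toLinearMap ∘ₗ rTensor M (bprodCounit k F U) ∘ₗ
          (TensorProduct.assoc k F U M).symm.toLinearMap) ∘ₗ lTensor F cmU ∘ₗ cmF := rfl
    _ = ((TensorProduct.lid k M).toLinearMap ∘ₗ rTensor M (counit (R := k) (A := F))) ∘ₗ
          lTensor F (((TensorProduct.lid k M).toLinearMap ∘ₗ
            rTensor M (counit (R := k) (A := U))) ∘ₗ cmU) ∘ₗ cmF := by
        rw [lid_comp_rTensor_bprodCounit_comp_assoc_symm, lTensor_comp F _ cmU]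
        rfl
    _ = LinearMap.id := by
        rw [hU', lTensor_id, id_comp]
        exact hF

theorem assoc_comp_rTensor_bprodComul_comp_combinedCoaction (cU : U →ₗ[k] U ⊗[k] F)
    (hF : (TensorProduct.assoc k F F M).toLinearMap ∘ₗ rTensor M (comul (R := k) (A := F)) ∘ₗ cmF
      = lTensor F cmF ∘ₗ cmF)
    (hU : (TensorProduct.assoc k U U M).toLinearMap ∘ₗ rTensor M (comul (R := k) (A := U)) ∘ₗ cmU
      = lTensor U cmU ∘ₗ cmU) :
    (TensorProduct.assoc k (F ⊗[k] U) (F ⊗[k] U) M).toLinearMap ∘ₗ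
        rTensor M (bprodComul k F U cU) ∘ₗ combinedCoaction k cmF cmU
      = (assocPairs k F U F U M).toLinearMap ∘ₗ
          lTensor F (lTensor U (lTensor F cmU) ∘ₗ coactionTwist k cU M ∘ₗ lTensor F cmU ∘ₗ cmF) ∘ₗ
            cmF := by
  have hU' : ((TensorProduct.assoc k U U M).toLinearMap ∘ₗ
      rTensor M (comul (R := k) (A := U))) ∘ₗ cmU = lTensor U cmU ∘ₗ cmU := hU
  calc _ = ((assocPairs k F U F U M).toLinearMap ∘ₗ lTensor F (coactionTwist k cU (U ⊗[k] M)) ∘ₗ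
          (TensorProduct.assoc k F F _).toLinearMap ∘ₗ rTensor _ (comul (R := k) (A := F)) ∘ₗ
            lTensor F ((TensorProduct.assoc k U U M).toLinearMap ∘ₗ
              rTensor M (comul (R := k) (A := U)))) ∘ₗ lTensor F cmU ∘ₗ cmF := by
        rw [← assoc_comp_rTensor_bprodComul_comp_assoc_symm]
        rfl
    _ = (assocPairs k F U F U M).toLinearMap ∘ₗ lTensor F (coactionTwist k cU (U ⊗[k] M)) ∘ₗ
          (TensorProduct.assoc k F F _).toLinearMap ∘ₗ rTensor _ (comul (R := k) (A := F)) ∘ₗ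
            lTensor F (lTensor U cmU ∘ₗ cmU) ∘ₗ cmF := by
        rw [← hU', lTensor_comp F _ cmU]
        rfl
    _ = (assocPairs k F U F U M).toLinearMap ∘ₗ lTensor F (coactionTwist k cU (U ⊗[k] M)) ∘ₗ
          lTensor F (lTensor F (lTensor U cmU ∘ₗ cmU) ∘ₗ cmF) ∘ₗ cmF := by
        rw [assoc_comp_rTensor_comul_comp_lTensor hF]
    _ = _ := by
        simp only [lTensor_comp, ← comp_assoc, lTensor_lTensor_comp_coactionTwist]

end BicrossedProduct

theorem comodule_over_bicrossed_product_iff_general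
    -- the matched pair structure maps
    (cU : U →ₗ[k] U ⊗[k] F)
    -- the two comodule structures on `M`
    (cmF : M →ₗ[k] F ⊗[k] M) (cmU : M →ₗ[k] U ⊗[k] M)
    (hF : IsComodG (Coalgebra.comul (R := k) (A := F))
      (Coalgebra.counit (R := k) (A := F)) cmF)
    (hU : IsComodG (Coalgebra.comul (R := k) (A := U))
      (Coalgebra.counit (R := k) (A := U)) cmU) :
    -- the combined map `m ↦ m⟪₋₁⟫ ⊗ m⟪₀⟫⟦₋₁⟧ ⊗ m⟪₀⟫⟦₀⟧` is an `F ⋈ U`-comodule iff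
    IsComodG (bprodComul k F U cU) (bprodCounit k F U)
      ((TensorProduct.assoc k F U M).symm.toLinearMap ∘ₗ (LinearMap.lTensor F cmU) ∘ₗ cmF)
      ↔
    -- the mixed compatibility (in `U ⊗ (F ⊗ M)`):
    ((LinearMap.lTensor U
        ((LinearMap.rTensor M (LinearMap.mul' k F)) ∘ₗ
          (TensorProduct.assoc k F F M).symm.toLinearMap)) ∘ₗ
      (swapHead k F U (F ⊗[k] M)) ∘ₗ
        (LinearMap.lTensor F ((TensorProduct.assoc k U F M).toLinearMap ∘ₗ
          (LinearMap.rTensor M cU))) ∘ₗ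
          (LinearMap.lTensor F cmU) ∘ₗ cmF
      = (LinearMap.lTensor U cmF) ∘ₗ cmU) := by
  obtain ⟨hF_coassoc, hF_counit⟩ := hF
  obtain ⟨hU_coassoc, hU_counit⟩ := hU
  have hcmU_retract : lTensor F ((TensorProduct.lid k M).toLinearMap ∘ₗ
      rTensor M (counit (R := k) (A := U))) ∘ₗ lTensor F cmU = LinearMap.id := by
    rw [← lTensor_comp, comp_assoc, hU_counit, lTensor_id]
  change IsComodG _ _ (combinedCoaction k cmF cmU) ↔
    coactionTwist k cU M ∘ₗ lTensor F cmU ∘ₗ cmF = _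
  rw [IsComodG,
    and_iff_left (lid_comp_rTensor_bprodCounit_comp_combinedCoaction hF_counit hU_counit),
    assoc_comp_rTensor_bprodComul_comp_combinedCoaction cU hF_coassoc hU_coassoc,
    lTensor_combinedCoaction_comp_combinedCoaction, LinearEquiv.comp_toLinearMap_eq_iff,
    lTensor_comp_eq_lTensor_comp_iff_of_counit hF_counit,
    lTensor_comp_cancel_left hcmU_retract]

theorem comodule_over_bicrossed_product_iff
    -- the matched pair structure maps
    (act : U →ₗ[k] F →ₗ[k] F) (cU : U →ₗ[k] U ⊗[k] F)
    -- the two comodule structures on `M`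
    (cmF : M →ₗ[k] F ⊗[k] M) (cmU : M →ₗ[k] U ⊗[k] M)
    (hF : IsComodG (Coalgebra.comul (R := k) (A := F))
      (Coalgebra.counit (R := k) (A := F)) cmF)
    (hU : IsComodG (Coalgebra.comul (R := k) (A := U))
      (Coalgebra.counit (R := k) (A := U)) cmU) :
    -- the combined map `m ↦ m⟪₋₁⟫ ⊗ m⟪₀⟫⟦₋₁⟧ ⊗ m⟪₀⟫⟦₀⟧` is an `F ⋈ U`-comodule iff
    IsComodG (bprodComul k F U cU) (bprodCounit k F U)
      ((TensorProduct.assoc k F U M).symm.toLinearMap ∘ₗ (LinearMap.lTensor F cmU) ∘ₗ cmF)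
      ↔
    -- the mixed compatibility (in `U ⊗ (F ⊗ M)`):
    ((LinearMap.lTensor U
        ((LinearMap.rTensor M (LinearMap.mul' k F)) ∘ₗ
          (TensorProduct.assoc k F F M).symm.toLinearMap)) ∘ₗ
      (swapHead k F U (F ⊗[k] M)) ∘ₗ
        (LinearMap.lTensor F ((TensorProduct.assoc k U F M).toLinearMap ∘ₗ
          (LinearMap.rTensor M cU))) ∘ₗ
          (LinearMap.lTensor F cmU) ∘ₗ cmF
      = (LinearMap.lTensor U cmF) ∘ₗ cmU) :=
  comodule_over_bicrossed_product_iff_general cU cmF cmU hF hU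

end
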